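/- Full layered decomposition of the Hadamard matrix (Proposition 4): for N = 2^L with L ≥ 1, H_N = P_L·D·P_{L−1}·D·⋯·P_1·D·P_0, where D = I_{2^{L−1}} ⊗ H_2 (the same block diagonal matrix in every layer), P_ℓ = (I_{2^{L−ℓ−1}} ⊗ P̃_{2^{ℓ+1}}^T)·(I_{2^{L−ℓ}} ⊗ P̃_{2^ℓ}) for ℓ = 0,…,L−1, and P_L = P̃_{2^L}. All the P_ℓ are permutation matrices. -/

import Mathlib

open Matrix Complex

/-- Cast a square matrix along an equality of sizes. -/
noncomputable def castM {m n : ℕ} (h : m = n) (A : Matrix (Fin m) (Fin m) ℂ) :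
    Matrix (Fin n) (Fin n) ℂ :=
  Matrix.reindex (finCongr h) (finCongr h) A

/-- Kronecker product of two square matrices, with row-major flattened indices. -/
noncomputable def kronF {m n : ℕ} (A : Matrix (Fin m) (Fin m) ℂ)
    (B : Matrix (Fin n) (Fin n) ℂ) : Matrix (Fin (m * n)) (Fin (m * n)) ℂ :=
  Matrix.reindex finProdFinEquiv finProdFinEquiv (Matrix.kroneckerMap (· * ·) A B)

/-- The odd-even permutation matrix `P̃_N` (0-based indices):
`[P̃_N]_{i,k} = 1` iff (`2i < N` and `k = 2i`) or (`2i ≥ N` and `k = 2i+1−N`). -/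
noncomputable def oddEvenPerm (N : ℕ) : Matrix (Fin N) (Fin N) ℂ :=
  Matrix.of fun i k =>
    if (2 * i.val < N ∧ k.val = 2 * i.val) ∨ (N ≤ 2 * i.val ∧ k.val = 2 * i.val + 1 - N)
    then 1 else 0

/-- The base 2×2 Hadamard matrix `H_2 = (1/√2)·[[1,1],[1,−1]]`. -/
noncomputable def H2 : Matrix (Fin 2) (Fin 2) ℂ :=
  (1 / (Real.sqrt 2 : ℂ)) • !![1, 1; 1, -1]

/-- The Hadamard matrices: `H_1 = 1` and `H_{2^{L+1}} = H_2 ⊗ H_{2^L}`. -/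
noncomputable def hadamardMat : (L : ℕ) → Matrix (Fin (2 ^ L)) (Fin (2 ^ L)) ℂ
  | 0 => 1
  | L + 1 => castM (by ring) (kronF H2 (hadamardMat L))

/-- `I_{N/M} ⊗ A` for an `M×M` matrix `A` (intended for `M ∣ N`), written entrywise. -/
noncomputable def IkronM (N : ℕ) {M : ℕ} (A : Matrix (Fin M) (Fin M) ℂ) :
    Matrix (Fin N) (Fin N) ℂ :=
  Matrix.of fun i k =>
    if hM : 0 < M then
      if i.val / M = k.val / M then
        A ⟨i.val % M, Nat.mod_lt _ hM⟩ ⟨k.val % M, Nat.mod_lt _ hM⟩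
      else 0
    else 0

/-- A matrix is a permutation matrix if it is the 0/1 matrix of some permutation. -/
def IsPermutationMatrix {n : ℕ} (A : Matrix (Fin n) (Fin n) ℂ) : Prop :=
  ∃ σ : Equiv.Perm (Fin n), ∀ i k, A i k = if σ i = k then 1 else 0

/-- The permutation matrices `P_ℓ` of Proposition 4:
`P_ℓ = (I_{2^{L−ℓ−1}} ⊗ P̃_{2^{ℓ+1}}ᵀ)·(I_{2^{L−ℓ}} ⊗ P̃_{2^ℓ})` for `0 ≤ ℓ ≤ L−1`,
and `P_L = P̃_{2^L}`. -/
noncomputable def hadP (L ℓ : ℕ) : Matrix (Fin (2 ^ L)) (Fin (2 ^ L)) ℂ :=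
  if ℓ = L then oddEvenPerm (2 ^ L)
  else IkronM (2 ^ L) ((oddEvenPerm (2 ^ (ℓ + 1)))ᵀ) * IkronM (2 ^ L) (oddEvenPerm (2 ^ ℓ))

/-!
Unrolling `H_{2^{L+1}} = (H_2 ⊗ I)(I_2 ⊗ H_{2^L})` gives the butterfly factorization
`H_{2^L} = ∏_j I ⊗ H_2 ⊗ I_{2^j}`. The perfect shuffle `P̃_{2M}` conjugates `I_M ⊗ H_2`
into `H_2 ⊗ I_M`, so with `Q_ℓ = I ⊗ P̃_{2^ℓ}` the `j`-th factor is `Q_{j+1} D Q_{j+1}ᵀ`.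
Since `P_ℓ = Q_{ℓ+1}ᵀ Q_ℓ`, `P_L = Q_L` and `Q_0 = 1`, the product `P_L D P_{L−1} ⋯ D P_0`
telescopes to this factorization.
-/

section Telescope

variable {G : Type*} [Monoid G]

theorem prod_range_reverse_mul_shift (f : ℕ → G) (D : G) (n : ℕ) :
    ((List.range n).reverse.map fun j => f (j + 1) * D).prod * f 0 =
      f n * ((List.range n).reverse.map fun j => D * f j).prod := by
  induction n with
  | zero => simp
  | succ n ih =>
    simp only [List.range_succ, List.reverse_append, List.reverse_singleton, List.singleton_append,
      List.map_cons, List.prod_cons, mul_assoc, ih]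

theorem prod_range_reverse_telescope (Q R : ℕ → G) (D : G) (n : ℕ) :
    Q n * ((List.range n).reverse.map fun j => D * (R (j + 1) * Q j)).prod =
      ((List.range n).reverse.map fun j => Q (j + 1) * D * R (j + 1)).prod * Q 0 := by
  induction n with
  | zero => simp
  | succ n ih =>
    simp only [List.range_succ, List.reverse_append, List.reverse_singleton, List.singleton_append,
      List.map_cons, List.prod_cons]
    rw [mul_assoc _ _ (Q 0), ← ih]
    simp only [mul_assoc]

theorem prod_range_reverse_conj_telescope (P Q R : ℕ → G) (D : G) (n : ℕ)
    (hP : ∀ j < n, P j = R (j + 1) * Q j) (hPn : P n = Q n) :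
    ((List.range n).reverse.map fun j => P (j + 1) * D).prod * P 0 =
      ((List.range n).reverse.map fun j => Q (j + 1) * D * R (j + 1)).prod * Q 0 := by
  rw [prod_range_reverse_mul_shift, hPn, ← prod_range_reverse_telescope]
  congr 2
  exact List.map_congr_left fun j hj => by rw [hP j (by simpa using hj)]

end Telescope

section PermMatrix

variable {n p R : Type*} [DecidableEq n] [DecidableEq p]

theorem permMatrix_apply [Zero R] [One R] (σ : Equiv.Perm n) (i k : n) :
    σ.permMatrix R i k = if σ i = k then 1 else 0 := by
  simp [PEquiv.toMatrix_apply, Equiv.toPEquiv_apply]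

theorem permMatrix_mul_mul_transpose [Fintype n] [NonAssocSemiring R] (σ : Equiv.Perm n)
    (X : Matrix n n R) : σ.permMatrix R * X * (σ.permMatrix R)ᵀ = X.submatrix σ σ := by
  rw [transpose_permMatrix, PEquiv.toMatrix_toPEquiv_mul, PEquiv.mul_toMatrix_toPEquiv]
  rfl

theorem kronecker_permMatrix [MulZeroOneClass R] (σ : Equiv.Perm n) (τ : Equiv.Perm p) :
    kroneckerMap (· * ·) (σ.permMatrix R) (τ.permMatrix R) =
      Equiv.Perm.permMatrix R (Equiv.prodCongr σ τ) := by
  ext ⟨i, i'⟩ ⟨k, k'⟩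
  simp only [kroneckerMap_apply, permMatrix_apply, Equiv.prodCongr_apply, Prod.map_apply,
    Prod.mk.injEq, ite_zero_mul_ite_zero, one_mul]

theorem reindex_permMatrix [Zero R] [One R] (e : n ≃ p) (σ : Equiv.Perm n) :
    reindex e e (σ.permMatrix R) = (e.permCongr σ).permMatrix R := by
  ext i k
  simp [Equiv.permCongr_apply, Equiv.eq_symm_apply]

end PermMatrix

theorem isPermutationMatrix_iff {m : ℕ} {A : Matrix (Fin m) (Fin m) ℂ} :
    IsPermutationMatrix A ↔ ∃ σ : Equiv.Perm (Fin m), σ.permMatrix ℂ = A := by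
  refine exists_congr fun σ => ⟨fun h => ?_, fun h i k => ?_⟩
  · ext i k
    rw [h, permMatrix_apply]
  · rw [← h, permMatrix_apply]

namespace IsPermutationMatrix

variable {m : ℕ} {A B : Matrix (Fin m) (Fin m) ℂ}

theorem one : IsPermutationMatrix (1 : Matrix (Fin m) (Fin m) ℂ) :=
  isPermutationMatrix_iff.2 ⟨1, permMatrix_one⟩

theorem mul (hA : IsPermutationMatrix A) (hB : IsPermutationMatrix B) :
    IsPermutationMatrix (A * B) := by
  obtain ⟨σ, rfl⟩ := isPermutationMatrix_iff.1 hA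
  obtain ⟨τ, rfl⟩ := isPermutationMatrix_iff.1 hB
  exact isPermutationMatrix_iff.2 ⟨τ * σ, permMatrix_mul τ σ⟩

theorem transpose (hA : IsPermutationMatrix A) : IsPermutationMatrix Aᵀ := by
  obtain ⟨σ, rfl⟩ := isPermutationMatrix_iff.1 hA
  exact isPermutationMatrix_iff.2 ⟨σ⁻¹, (transpose_permMatrix σ).symm⟩

end IsPermutationMatrix

section IkronM

variable {N M : ℕ}

def finDivProdEquiv (hMN : M ∣ N) : Fin (N / M) × Fin M ≃ Fin N :=
  finProdFinEquiv.trans (finCongr (Nat.div_mul_cancel hMN))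

theorem IkronM_apply (hM : 0 < M) (A : Matrix (Fin M) (Fin M) ℂ) (i k : Fin N) :
    IkronM N A i k =
      if i.val / M = k.val / M then
        A ⟨i.val % M, Nat.mod_lt _ hM⟩ ⟨k.val % M, Nat.mod_lt _ hM⟩
      else 0 := by
  simp [IkronM, hM]

theorem IkronM_eq_reindex_kronecker (hM : 0 < M) (hMN : M ∣ N) (A : Matrix (Fin M) (Fin M) ℂ) :
    IkronM N A = reindex (finDivProdEquiv hMN) (finDivProdEquiv hMN)
      (kroneckerMap (· * ·) (1 : Matrix (Fin (N / M)) (Fin (N / M)) ℂ) A) := by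
  ext i k
  have hq : ∀ j : Fin N, (((finDivProdEquiv hMN).symm j).1 : ℕ) = j / M := fun j => rfl
  have hr : ∀ j : Fin N, ((finDivProdEquiv hMN).symm j).2 = ⟨j % M, Nat.mod_lt _ hM⟩ :=
    fun j => rfl
  rw [IkronM_apply hM, reindex_apply, submatrix_apply, kroneckerMap_apply, one_apply, hr, hr]
  simp only [Fin.ext_iff, hq, ite_mul, one_mul, zero_mul]

theorem IkronM_mul (hM : 0 < M) (hMN : M ∣ N) (A B : Matrix (Fin M) (Fin M) ℂ) :
    IkronM N (A * B) = IkronM N A * IkronM N B := by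
  simp only [IkronM_eq_reindex_kronecker hM hMN, reindex_apply, submatrix_mul_equiv,
    ← mul_kronecker_mul, one_mul]

theorem IkronM_one (hM : 0 < M) (hMN : M ∣ N) :
    IkronM N (1 : Matrix (Fin M) (Fin M) ℂ) = 1 := by
  rw [IkronM_eq_reindex_kronecker hM hMN, one_kronecker_one, reindex_apply,
    submatrix_one_equiv]

theorem IkronM_transpose (hM : 0 < M) (hMN : M ∣ N) (A : Matrix (Fin M) (Fin M) ℂ) :
    IkronM N Aᵀ = (IkronM N A)ᵀ := by
  rw [IkronM_eq_reindex_kronecker hM hMN, IkronM_eq_reindex_kronecker hM hMN,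
    transpose_reindex, ← kroneckerMap_transpose, transpose_one]

theorem IkronM_list_prod (hM : 0 < M) (hMN : M ∣ N) (l : List (Matrix (Fin M) (Fin M) ℂ)) :
    IkronM N l.prod = (l.map (IkronM N)).prod := by
  induction l with
  | nil => exact IkronM_one hM hMN
  | cons A l ih => rw [List.prod_cons, IkronM_mul hM hMN, ih, List.map_cons, List.prod_cons]

theorem IsPermutationMatrix.IkronM (hM : 0 < M) (hMN : M ∣ N) {A : Matrix (Fin M) (Fin M) ℂ}
    (hA : IsPermutationMatrix A) : IsPermutationMatrix (IkronM N A) := by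
  obtain ⟨σ, rfl⟩ := isPermutationMatrix_iff.1 hA
  rw [isPermutationMatrix_iff, IkronM_eq_reindex_kronecker hM hMN, ← permMatrix_one,
    kronecker_permMatrix, reindex_permMatrix]
  exact ⟨_, rfl⟩

theorem IkronM_self (A : Matrix (Fin M) (Fin M) ℂ) : IkronM M A = A := by
  ext i k
  rw [IkronM_apply i.pos, Nat.div_eq_of_lt i.isLt, Nat.div_eq_of_lt k.isLt, if_pos rfl]
  simp only [Nat.mod_eq_of_lt i.isLt, Nat.mod_eq_of_lt k.isLt]

theorem IkronM_IkronM {K : ℕ} (hK : 0 < K) (hM : 0 < M) (hKM : K ∣ M)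
    (A : Matrix (Fin K) (Fin K) ℂ) : IkronM N (IkronM M A) = IkronM N A := by
  ext i k
  rw [IkronM_apply hM, IkronM_apply hK, IkronM_apply hK]
  simp only [Nat.mod_mod_of_dvd _ hKM]
  obtain ⟨d, rfl⟩ := hKM
  simp only [Nat.mod_mul_right_div_self, ← Nat.div_div_eq_div_mul]
  have hsplit := Nat.ext_div_mod_iff d (i / K) (k / K)
  split_ifs <;> tauto

end IkronM

section Kronecker

variable {m n N : ℕ}

theorem castM_apply (h : m = N) (A : Matrix (Fin m) (Fin m) ℂ) (i k : Fin N) :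
    castM h A i k = A ⟨i, h ▸ i.isLt⟩ ⟨k, h ▸ k.isLt⟩ := rfl

theorem castM_mul (h : m = N) (A B : Matrix (Fin m) (Fin m) ℂ) :
    castM h (A * B) = castM h A * castM h B := by
  simp only [castM, reindex_apply, submatrix_mul_equiv]

theorem kronF_apply (hn : 0 < n) (A : Matrix (Fin m) (Fin m) ℂ) (B : Matrix (Fin n) (Fin n) ℂ)
    (i k : Fin (m * n)) :
    kronF A B i k =
      A ⟨i / n, Nat.div_lt_of_lt_mul (Nat.mul_comm m n ▸ i.isLt)⟩
          ⟨k / n, Nat.div_lt_of_lt_mul (Nat.mul_comm m n ▸ k.isLt)⟩ *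
        B ⟨i % n, Nat.mod_lt _ hn⟩ ⟨k % n, Nat.mod_lt _ hn⟩ := rfl

theorem kronF_mul (A C : Matrix (Fin m) (Fin m) ℂ) (B D : Matrix (Fin n) (Fin n) ℂ) :
    kronF A B * kronF C D = kronF (A * C) (B * D) := by
  simp only [kronF, reindex_apply, submatrix_mul_equiv, mul_kronecker_mul]

theorem castM_kronF_one (h : m * n = N) (hn : 0 < n) (A : Matrix (Fin n) (Fin n) ℂ) :
    castM h (kronF (1 : Matrix (Fin m) (Fin m) ℂ) A) = IkronM N A := by
  ext i k
  rw [castM_apply, kronF_apply hn, IkronM_apply hn, one_apply]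
  simp only [Fin.mk.injEq, ite_mul, one_mul, zero_mul]

end Kronecker

section OddEven

def oddEvenEquiv (N : ℕ) (hN : 2 ∣ N) : Equiv.Perm (Fin N) where
  toFun i := ⟨if 2 * i.val < N then 2 * i.val else 2 * i.val + 1 - N, by grind⟩
  invFun k := ⟨if k.val % 2 = 0 then k.val / 2 else (k.val + N) / 2, by grind⟩
  left_inv i := by grind
  right_inv k := by grind

variable {N M : ℕ}

theorem oddEvenPerm_eq_permMatrix (hN : 2 ∣ N) :
    oddEvenPerm N = (oddEvenEquiv N hN).permMatrix ℂ := by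
  ext i k
  rw [permMatrix_apply, oddEvenPerm, of_apply]
  congr 1
  rw [eq_iff_iff, Fin.ext_iff]
  simp only [oddEvenEquiv, Equiv.coe_fn_mk]
  grind

theorem oddEvenPerm_one : oddEvenPerm 1 = 1 := by
  ext i k
  fin_cases i
  fin_cases k
  simp [oddEvenPerm]

theorem isPermutationMatrix_oddEvenPerm_two_pow (ℓ : ℕ) :
    IsPermutationMatrix (oddEvenPerm (2 ^ ℓ)) := by
  cases ℓ with
  | zero => exact oddEvenPerm_one ▸ IsPermutationMatrix.one
  | succ ℓ =>
    rw [oddEvenPerm_eq_permMatrix (dvd_pow_self 2 ℓ.succ_ne_zero)]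
    exact isPermutationMatrix_iff.2 ⟨_, rfl⟩

theorem oddEvenEquiv_val (hN : 2 ∣ N) (h : 2 * M = N) (j : Fin N) :
    (oddEvenEquiv N hN j : ℕ) = 2 * (j % M) + j / M := by
  show (if 2 * j.val < N then 2 * j.val else 2 * j.val + 1 - N) = _
  rcases lt_or_ge j.val M with hj | hj
  · rw [Nat.mod_eq_of_lt hj, Nat.div_eq_of_lt hj]
    split_ifs <;> omega
  · rw [Nat.mod_eq_sub_mod hj, Nat.mod_eq_of_lt (by omega),
      Nat.div_eq_of_lt_le (k := 1) (by omega) (by omega)]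
    split_ifs <;> omega

theorem oddEvenPerm_mul_IkronM_mul_transpose (h : 2 * M = N) (A : Matrix (Fin 2) (Fin 2) ℂ) :
    oddEvenPerm N * IkronM N A * (oddEvenPerm N)ᵀ = castM h (kronF A 1) := by
  have hN : 2 ∣ N := ⟨M, h.symm⟩
  rw [oddEvenPerm_eq_permMatrix hN, permMatrix_mul_mul_transpose]
  ext i k
  have hM : 0 < M := by have := i.pos; omega
  have hσ : ∀ j : Fin N, (oddEvenEquiv N hN j : ℕ) / 2 = j % M ∧
      (oddEvenEquiv N hN j : ℕ) % 2 = j / M := fun j => by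
    have hj : j / M < 2 := Nat.div_lt_of_lt_mul (by omega)
    rw [oddEvenEquiv_val hN h j]
    generalize j / M = a at hj ⊢
    omega
  rw [submatrix_apply, IkronM_apply two_pos, castM_apply, kronF_apply hM, one_apply]
  simp only [(hσ i).1, (hσ i).2, (hσ k).1, (hσ k).2, Fin.mk.injEq, mul_ite, mul_one, mul_zero]

end OddEven

theorem IkronM_castM_kronF_one_eq_conj {N M K : ℕ} (hM : 0 < M) (h : 2 * M = K) (hKN : K ∣ N)
    (A : Matrix (Fin 2) (Fin 2) ℂ) :
    IkronM N (castM h (kronF A 1)) =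
      IkronM N (oddEvenPerm K) * IkronM N A * (IkronM N (oddEvenPerm K))ᵀ := by
  have hK : 0 < K := by omega
  rw [← IkronM_IkronM two_pos hK ⟨M, h.symm⟩ A, ← IkronM_transpose hK hKN,
    ← IkronM_mul hK hKN, ← IkronM_mul hK hKN, oddEvenPerm_mul_IkronM_mul_transpose h]

noncomputable def H2kronI (s : ℕ) : Matrix (Fin (2 ^ (s + 1))) (Fin (2 ^ (s + 1))) ℂ :=
  castM (pow_succ' 2 s).symm (kronF H2 1)

theorem hadamardMat_eq_prod_IkronM_H2kronI (L : ℕ) :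
    hadamardMat L = ((List.range L).reverse.map fun j => IkronM (2 ^ L) (H2kronI j)).prod := by
  induction L with
  | zero => rfl
  | succ L ih =>
    have hsplit : kronF H2 (hadamardMat L) = kronF H2 1 * kronF 1 (hadamardMat L) := by
      rw [kronF_mul, mul_one, one_mul]
    have hnest : (List.range L).reverse.map
          (IkronM (2 ^ (L + 1)) ∘ fun j => IkronM (2 ^ L) (H2kronI j)) =
        (List.range L).reverse.map fun j => IkronM (2 ^ (L + 1)) (H2kronI j) :=
      List.map_congr_left fun j hj => IkronM_IkronM (Nat.two_pow_pos _) (Nat.two_pow_pos _)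
        (pow_dvd_pow 2 (by simpa using hj)) _
    rw [show hadamardMat (L + 1) = castM _ (kronF H2 (hadamardMat L)) from rfl, hsplit, castM_mul,
      castM_kronF_one _ (Nat.two_pow_pos L), ih,
      IkronM_list_prod (Nat.two_pow_pos L) (pow_dvd_pow 2 L.le_succ), List.map_map, hnest,
      List.range_succ, List.reverse_append, List.reverse_singleton, List.singleton_append,
      List.map_cons, List.prod_cons, IkronM_self]
    rfl

theorem hadamard_layered_decomposition_general (L : ℕ) :
    hadamardMat L =
        ((List.finRange L).reverse.map fun i : Fin L =>
            hadP L (i.val + 1) * IkronM (2 ^ L) H2).prod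
          * hadP L 0
    ∧ ∀ ℓ ≤ L, IsPermutationMatrix (hadP L ℓ) := by
  set Q : ℕ → Matrix (Fin (2 ^ L)) (Fin (2 ^ L)) ℂ := fun ℓ =>
    IkronM (2 ^ L) (oddEvenPerm (2 ^ ℓ))
  have hP_lt : ∀ ℓ < L, hadP L ℓ = (Q (ℓ + 1))ᵀ * Q ℓ := fun ℓ hℓ => by
    rw [hadP, if_neg hℓ.ne, IkronM_transpose (Nat.two_pow_pos _) (pow_dvd_pow 2 hℓ)]
  have hP_top : hadP L L = Q L := by
    rw [hadP, if_pos rfl]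
    exact (IkronM_self _).symm
  have hQ_perm : ∀ ℓ ≤ L, IsPermutationMatrix (Q ℓ) := fun ℓ hℓ =>
    (isPermutationMatrix_oddEvenPerm_two_pow ℓ).IkronM (Nat.two_pow_pos ℓ) (pow_dvd_pow 2 hℓ)
  refine ⟨?_, fun ℓ hℓ => ?_⟩
  · have hQ_zero : Q 0 = 1 := by
      change IkronM (2 ^ L) (oddEvenPerm (2 ^ 0)) = 1
      rw [pow_zero, oddEvenPerm_one, IkronM_one one_pos (one_dvd _)]
    have hfin : ((List.finRange L).reverse.map fun i : Fin L =>
          hadP L (i.val + 1) * IkronM (2 ^ L) H2) =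
        (List.range L).reverse.map fun j => hadP L (j + 1) * IkronM (2 ^ L) H2 := by
      rw [← List.map_coe_finRange_eq_range, ← List.map_reverse, List.map_map]
      rfl
    rw [hfin, prod_range_reverse_conj_telescope (hadP L) Q (fun ℓ => (Q ℓ)ᵀ) _ L hP_lt hP_top,
      hQ_zero, mul_one, hadamardMat_eq_prod_IkronM_H2kronI]
    congr 1
    exact List.map_congr_left fun j hj => IkronM_castM_kronF_one_eq_conj (Nat.two_pow_pos j) _
      (pow_dvd_pow 2 (Nat.succ_le_of_lt (by simpa using hj))) H2
  · rcases hℓ.lt_or_eq with hlt | rfl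
    · rw [hP_lt ℓ hlt]
      exact (hQ_perm _ hlt).transpose.mul (hQ_perm ℓ hℓ)
    · rw [hadP, if_pos rfl]
      exact isPermutationMatrix_oddEvenPerm_two_pow ℓ

/-- **Full layered decomposition of the Hadamard matrix** (Proposition 4):
`H_{2^L} = P_L·D·P_{L−1}·D·⋯·P_1·D·P_0` with the same block diagonal matrix
`D = I_{2^{L−1}} ⊗ H_2` in every layer; moreover all `P_ℓ` are permutation matrices. -/
theorem hadamard_layered_decomposition (L : ℕ) (hL : 1 ≤ L) :
    hadamardMat L =
        ((List.finRange L).reverse.map fun i : Fin L =>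
            hadP L (i.val + 1) * IkronM (2 ^ L) H2).prod
          * hadP L 0
    ∧ ∀ ℓ ≤ L, IsPermutationMatrix (hadP L ℓ) :=
  hadamard_layered_decomposition_general L
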